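/- Let n, r ∈ ℕ with n ≠ r and max{n,r} > 1, θ ∈ (0, π/r), φ = ((n-1)π + rθ)/n, and Q(ζ) = (sin(φ-θ)/sin θ − ζ sin φ/sin θ)^n + ζ^r. If ζ* is a multiple zero of Q (i.e., Q(ζ*) = Q'(ζ*) = 0), then ζ* = −(r/(n−r)) · sin(φ−θ)/sin φ. -/

import Mathlib

/-! At a multiple zero ζ of `(a - ζ b)ⁿ + ζʳ`, eliminating `(a - ζ b)ⁿ = -ζʳ` from
`ζ (a - ζ b) Q'(ζ) = 0` leaves `ζʳ ((n - r) b ζ + r a) = 0`, and `ζ ≠ 0` because `a ≠ 0`.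
For the trigonometric coefficients, `a = sin (φ - θ) / sin θ` and `b = sin φ / sin θ` are
nonzero since `θ`, `φ` and `φ - θ` all lie in `(0, π)`. -/

open Real Complex

theorem hasDerivAt_sub_mul_pow_add_pow {𝕜 : Type*} [NontriviallyNormedField 𝕜]
    (a b ζ : 𝕜) (n r : ℕ) :
    HasDerivAt (fun z => (a - z * b) ^ n + z ^ r)
      (n * (a - ζ * b) ^ (n - 1) * (-b) + r * ζ ^ (r - 1)) ζ := by
  simpa using
    (((hasDerivAt_id' ζ).mul_const b).const_sub a).fun_pow n |>.fun_add (hasDerivAt_pow r ζ)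

theorem eq_of_multiple_root_sub_mul_pow_add_pow {K : Type*} [Field K] {a b ζ : K} {n r : ℕ}
    (ha : a ≠ 0) (hb : b ≠ 0) (hnr : (n : K) ≠ r)
    (h0 : (a - ζ * b) ^ n + ζ ^ r = 0)
    (h1 : n * (a - ζ * b) ^ (n - 1) * (-b) + r * ζ ^ (r - 1) = 0) :
    ζ = -(r / (n - r)) * (a / b) := by
  have hu : (n : K) * (a - ζ * b) ^ (n - 1) * (a - ζ * b) = n * (a - ζ * b) ^ n := by
    rcases n with _ | n <;> simp [pow_succ, mul_assoc]
  have hz : (r : K) * ζ ^ (r - 1) * ζ = r * ζ ^ r := by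
    rcases r with _ | r <;> simp [pow_succ, mul_assoc]
  have hrel : ζ ^ r * ((n - r) * b * ζ + r * a) = 0 := by
    linear_combination ζ * (a - ζ * b) * h1 + ζ * b * hu - (a - ζ * b) * hz + n * b * ζ * h0
  have hζ : ζ ^ r ≠ 0 := by
    intro hζr
    have hζ0 : ζ = 0 := (pow_eq_zero_iff'.1 hζr).1
    rw [hζr, add_zero, hζ0, zero_mul, sub_zero] at h0
    exact ha (pow_eq_zero_iff'.1 h0).1
  have hlin := (mul_eq_zero.1 hrel).resolve_left hζ
  field_simp [sub_ne_zero.2 hnr]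
  linear_combination hlin

theorem phi_lt_pi {n r : ℕ} {θ φ : ℝ} (hφ : n * φ = (n - 1) * π + r * θ)
    (hrθ : r * θ < π) : φ < π := by
  have : (n : ℝ) * φ < n * π := by linarith
  exact lt_of_mul_lt_mul_left this n.cast_nonneg

theorem theta_lt_phi {n r : ℕ} {θ φ : ℝ} (hθ : 0 < θ) (hφ : n * φ = (n - 1) * π + r * θ)
    (hn : 0 < n) (hr : 0 < r) (hne : n ≠ r) (hrθ : r * θ < π) : θ < φ := by
  have hnR : (1 : ℝ) ≤ n := by exact_mod_cast hn
  suffices 0 < n * (φ - θ) from sub_pos.1 (pos_of_mul_pos_right this n.cast_nonneg)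
  rcases hne.lt_or_gt with h | h
  · have hnr : (n : ℝ) < r := by exact_mod_cast h
    have key : n * (φ - θ) = (n - 1) * π + (r - n) * θ := by linear_combination hφ
    rw [key]
    nlinarith [pi_pos, mul_pos (sub_pos.2 hnr) hθ]
  · have hrn : (r : ℝ) < n := by exact_mod_cast h
    have hrR : (1 : ℝ) ≤ r := by exact_mod_cast hr
    have key : r * (n * (φ - θ)) = (n - r) * (π - r * θ) + n * π * (r - 1) := by
      linear_combination r * hφ
    refine pos_of_mul_pos_right (a := (r : ℝ)) ?_ r.cast_nonneg
    rw [key]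
    have := mul_nonneg (mul_nonneg n.cast_nonneg pi_pos.le) (sub_nonneg.2 hrR)
    nlinarith [mul_pos (sub_pos.2 hrn) (sub_pos.2 hrθ)]

theorem stmt_15_general (n r : ℕ) (hn : 0 < n) (hr : 0 < r) (hne : n ≠ r)
    (θ : ℝ) (hθ : θ ∈ Set.Ioo 0 (π / r)) (φ : ℝ)
    (hφ : φ = (((n : ℝ) - 1) * π + r * θ) / n) (Q : ℂ → ℂ)
    (hQ : ∀ ζ, Q ζ = (((Real.sin (φ - θ) / Real.sin θ : ℝ) : ℂ)
        - ζ * ((Real.sin φ / Real.sin θ : ℝ) : ℂ)) ^ n + ζ ^ r)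
    (ζstar : ℂ) (h0 : Q ζstar = 0) (h1 : deriv Q ζstar = 0) :
    ζstar = -((r : ℂ) / ((n : ℂ) - (r : ℂ))) *
      ((Real.sin (φ - θ) / Real.sin φ : ℝ) : ℂ) := by
  obtain ⟨hθ0, hθr⟩ := hθ
  have hrθ : r * θ < π := (lt_div_iff₀' (by exact_mod_cast hr)).1 hθr
  have hφn : n * φ = (n - 1) * π + r * θ := by rw [hφ]; field_simp
  have hθφ := theta_lt_phi hθ0 hφn hn hr hne hrθ
  have hφπ := phi_lt_pi hφn hrθ
  have hsθ := sin_pos_of_pos_of_lt_pi hθ0 (hθφ.trans hφπ)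
  have hsφ := sin_pos_of_pos_of_lt_pi (hθ0.trans hθφ) hφπ
  have hsφθ := sin_pos_of_pos_of_lt_pi (sub_pos.2 hθφ) (by linarith)
  rw [funext hQ] at h0 h1
  rw [(hasDerivAt_sub_mul_pow_add_pow _ _ _ n r).deriv] at h1
  rw [eq_of_multiple_root_sub_mul_pow_add_pow (ofReal_ne_zero.2 (div_pos hsφθ hsθ).ne')
    (ofReal_ne_zero.2 (div_pos hsφ hsθ).ne') (by exact_mod_cast hne) h0 h1, ← ofReal_div]
  congr 2
  field_simp

theorem stmt_15 (n r : ℕ) (hn : 0 < n) (hr : 0 < r) (hne : n ≠ r)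
    (hmax : 1 < max n r)
    (θ : ℝ) (hθ : θ ∈ Set.Ioo 0 (π / r)) (φ : ℝ)
    (hφ : φ = (((n : ℝ) - 1) * π + r * θ) / n) (Q : ℂ → ℂ)
    (hQ : ∀ ζ, Q ζ = (((Real.sin (φ - θ) / Real.sin θ : ℝ) : ℂ)
        - ζ * ((Real.sin φ / Real.sin θ : ℝ) : ℂ)) ^ n + ζ ^ r)
    (ζstar : ℂ) (h0 : Q ζstar = 0) (h1 : deriv Q ζstar = 0) :
    ζstar = -((r : ℂ) / ((n : ℂ) - (r : ℂ))) *
      ((Real.sin (φ - θ) / Real.sin φ : ℝ) : ℂ) :=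
  stmt_15_general n r hn hr hne θ hθ φ hφ Q hQ ζstar h0 h1
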